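/- If on the original filtered probability space there exists a martingale measure Q ∼ ℙ for S such that E_Q[f] < α, sup_{τ∈𝒯} E_Q[g_τ] < β, and there exist 𝔽-stopping times τ¹,…,τ^N with E_Q[h^k_{τ^k}] > γ^k for each k (so that sup_{τ∈𝒯} E_Q[h_τ] > γ), then 𝒬̄^N ≠ ∅; indeed, writing Q'(A) := ∫ 1_A(ω,τ¹(ω),…,τ^N(ω)) Q(dω) and Q'' := Q⊗P for any full-support probability P on 𝕋^N, the convex combination Q_λ := (1−λ)Q' + λQ'' lies in 𝒬̄^N for all λ ∈ (0,1) sufficiently close to 0. -/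
import Mathlib


open MeasureTheory Finset

noncomputable section

namespace Stmt6

variable {Ω : Type*}

/-- The enlarged sample space `Ω̄ⁿ = Ω × 𝕋ⁿ`, `𝕋 = {0,…,T}`. -/
abbrev EnlOmega (Ω : Type*) (T n : ℕ) := Ω × (Fin n → Fin (T + 1))

/-- The enlarged filtration
`𝓕̄ⁿ_t = σ(𝓕_t × 𝕋ⁿ, {θᵏ ≤ s}, s = 0,…,t, k = 1,…,n)`. -/
def enlF (T n : ℕ) (ℱ : ℕ → MeasurableSpace Ω) (t : ℕ) :
    MeasurableSpace (EnlOmega Ω T n) :=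
  MeasurableSpace.generateFrom
    ({A | ∃ B, MeasurableSet[ℱ t] B ∧ A = Prod.fst ⁻¹' B} ∪
     {A | ∃ (k : Fin n) (s : ℕ), s ≤ t ∧ A = {x : EnlOmega Ω T n | ((x.2 k : ℕ)) ≤ s}})

/-- Trivial extension of a process from `Ω` to `Ω̄ⁿ`. -/
def extProc {E : Type*} (T n : ℕ) (X : ℕ → Ω → E) : ℕ → EnlOmega Ω T n → E :=
  fun t x => X t x.1

/-- Trivial extension of a random variable from `Ω` to `Ω̄ⁿ`. -/
def extFun {E : Type*} (T n : ℕ) (ψ : Ω → E) : EnlOmega Ω T n → E := fun x => ψ x.1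

/-- Extension `h̄^{k,n}(ω,t¹,…,tⁿ) = h^k_{tᵏ}(ω)` of the shorted American options. -/
def extShort (T N n : ℕ) (hn : N ≤ n) (h : Fin N → ℕ → Ω → ℝ) (k : Fin N) :
    EnlOmega Ω T n → ℝ :=
  fun x => h k ((x.2 (Fin.castLE hn k)) : ℕ) x.1

/-- Extension `φ̄^{N+1}(ω,t¹,…,t^{N+1}) = φ_{t^{N+1}}(ω)`. -/
def extLast (T N : ℕ) (φ : ℕ → Ω → ℝ) : EnlOmega Ω T (N + 1) → ℝ :=
  fun x => φ ((x.2 (Fin.last N)) : ℕ) x.1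

/-- `𝒯̄ⁿ`: `𝔽̄ⁿ`-stopping times (with values in `𝕋 = {0,…,T}`). -/
def IsEnlStoppingTime (T n : ℕ) (ℱ : ℕ → MeasurableSpace Ω)
    (τ : EnlOmega Ω T n → Fin (T + 1)) : Prop :=
  ∀ t : ℕ, MeasurableSet[enlF T n ℱ t] {x | (τ x : ℕ) ≤ t}

/-- `S` is a `Q`-martingale w.r.t. the filtration `𝔉` (time horizon `T`). -/
def IsMartingaleMeasure {X : Type*} [MeasurableSpace X] (T d : ℕ)
    (𝔉 : ℕ → MeasurableSpace X) (S : ℕ → X → Fin d → ℝ) (Q : Measure X) : Prop :=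
  (∀ t, t ≤ T → Integrable (S t) Q) ∧
  ∀ t, t < T → ∀ A : Set X, MeasurableSet[𝔉 t] A →
    ∫ x in A, S (t + 1) x ∂Q = ∫ x in A, S t x ∂Q

/-- `𝓛̄ⁿ`: liquidating strategies on the enlarged space. -/
def EnlLiq (T n : ℕ) (ℱ : ℕ → MeasurableSpace Ω) : Set (ℕ → EnlOmega Ω T n → ℝ) :=
  {μ | (∀ t, Measurable[enlF T n ℱ t] (μ t)) ∧ (∀ t x, 0 ≤ μ t x) ∧
    ∀ x, ∑ t ∈ Finset.range (T + 1), μ t x = 1}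

/-- Gain from dynamic trading on the enlarged space. -/
def enlStockGain (T d n : ℕ) (H : ℕ → EnlOmega Ω T n → Fin d → ℝ)
    (S : ℕ → Ω → Fin d → ℝ) (x : EnlOmega Ω T n) : ℝ :=
  ∑ t ∈ Finset.range T, ∑ i, H t x i * (S (t + 1) x.1 i - S t x.1 i)

/-- The payoff `Φ̄ⁿ_{α,β,γ}(H̄,a,b,μ̄,c)` of a semi-static strategy on the enlarged space. -/
def PhiBar (T d L M N n : ℕ) (hn : N ≤ n)
    (S : ℕ → Ω → Fin d → ℝ) (f : Fin L → Ω → ℝ) (g : Fin M → ℕ → Ω → ℝ)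
    (h : Fin N → ℕ → Ω → ℝ) (α : Fin L → ℝ) (β : Fin M → ℝ) (γ : Fin N → ℝ)
    (H : ℕ → EnlOmega Ω T n → Fin d → ℝ) (a : Fin L → ℝ) (b : Fin M → ℝ)
    (μ : Fin M → ℕ → EnlOmega Ω T n → ℝ) (c : Fin N → ℝ) (x : EnlOmega Ω T n) : ℝ :=
  enlStockGain T d n H S x + (∑ i, a i * (f i x.1 - α i))
    + (∑ j, b j * ((∑ t ∈ Finset.range (T + 1), g j t x.1 * μ j t x) - β j))
    - ∑ k, c k * (extShort T N n hn h k x - γ k)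

variable [MeasurableSpace Ω]

/-- No arbitrage (NA) in `𝕄̄ⁿ` w.r.t. the prices `(α,β,γ)`. -/
def NAbar (T d L M N n : ℕ) (hn : N ≤ n) (ℱ : ℕ → MeasurableSpace Ω)
    (S : ℕ → Ω → Fin d → ℝ) (f : Fin L → Ω → ℝ) (g : Fin M → ℕ → Ω → ℝ)
    (h : Fin N → ℕ → Ω → ℝ) (Pbar : Measure (EnlOmega Ω T n))
    (α : Fin L → ℝ) (β : Fin M → ℝ) (γ : Fin N → ℝ) : Prop :=
  ∀ H a b μ c, (∀ t, Measurable[enlF T n ℱ t] (H t)) → (∀ i, 0 ≤ a i) →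
    (∀ j, 0 ≤ b j) → (∀ k, 0 ≤ c k) → (∀ j, μ j ∈ EnlLiq T n ℱ) →
    (∀ᵐ x ∂Pbar, 0 ≤ PhiBar T d L M N n hn S f g h α β γ H a b μ c x) →
    ∀ᵐ x ∂Pbar, PhiBar T d L M N n hn S f g h α β γ H a b μ c x = 0

/-- Strict no arbitrage (SNA) in `𝕄̄ⁿ`. -/
def SNAbar (T d L M N n : ℕ) (hn : N ≤ n) (ℱ : ℕ → MeasurableSpace Ω)
    (S : ℕ → Ω → Fin d → ℝ) (f : Fin L → Ω → ℝ) (g : Fin M → ℕ → Ω → ℝ)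
    (h : Fin N → ℕ → Ω → ℝ) (Pbar : Measure (EnlOmega Ω T n))
    (α : Fin L → ℝ) (β : Fin M → ℝ) (γ : Fin N → ℝ) : Prop :=
  ∃ ε > (0 : ℝ), NAbar T d L M N n hn ℱ S f g h Pbar
    (fun i => α i - ε) (fun j => β j - ε) (fun k => γ k + ε)

/-- `sup_{τ ∈ 𝒯̄ⁿ} E_Q[ḡ_τ]` for an American option `g` on the original space. -/
def supStop (T n : ℕ) (ℱ : ℕ → MeasurableSpace Ω) (g : ℕ → Ω → ℝ)
    (Q : Measure (EnlOmega Ω T n)) : ℝ :=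
  sSup {r : ℝ | ∃ τ, IsEnlStoppingTime T n ℱ τ ∧ r = ∫ x, g ((τ x) : ℕ) x.1 ∂Q}

/-- The set `𝒬̄ⁿ` of martingale measures equivalent to `ℙ̄ⁿ` satisfying the strict
price inequalities. -/
def QbarSet (T d L M N n : ℕ) (hn : N ≤ n) (ℱ : ℕ → MeasurableSpace Ω)
    (S : ℕ → Ω → Fin d → ℝ) (f : Fin L → Ω → ℝ) (g : Fin M → ℕ → Ω → ℝ)
    (h : Fin N → ℕ → Ω → ℝ) (Pbar : Measure (EnlOmega Ω T n))
    (α : Fin L → ℝ) (β : Fin M → ℝ) (γ : Fin N → ℝ) :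
    Set (Measure (EnlOmega Ω T n)) :=
  {Q | IsProbabilityMeasure Q ∧ Q ≪ Pbar ∧ Pbar ≪ Q ∧
    IsMartingaleMeasure T d (enlF T n ℱ) (extProc T n S) Q ∧
    (∀ i, ∫ x, extFun T n (f i) x ∂Q < α i) ∧
    (∀ k, γ k < ∫ x, extShort T N n hn h k x ∂Q) ∧
    ∀ j, supStop T n ℱ (g j) Q < β j}

/-- `𝒯`: `𝔽`-stopping times on the original space, valued in `𝕋 = {0,…,T}`. -/
def IsOrigStoppingTime (T : ℕ) (ℱ : ℕ → MeasurableSpace Ω) (τ : Ω → Fin (T + 1)) : Prop :=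
  ∀ t : ℕ, MeasurableSet[ℱ t] {ω | (τ ω : ℕ) ≤ t}

/-- `Q'(A) = ∫ 1_A(ω, τ¹(ω),…,τ^N(ω)) Q(dω)`. -/
def stopPush (T N : ℕ) (Q : Measure Ω) (τ : Fin N → Ω → Fin (T + 1)) :
    Measure (EnlOmega Ω T N) :=
  Q.map (fun ω => (ω, fun k : Fin N => τ k ω))

/-- Convex combination `(1-λ)Q' + λQ''` of measures. -/
def convComb {X : Type*} [MeasurableSpace X] (lam : ℝ) (Q' Q'' : Measure X) : Measure X :=
  ENNReal.ofReal (1 - lam) • Q' + ENNReal.ofReal lam • Q''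


section Aux

lemma measurableSet_V {T N : ℕ} (s : Set (Fin N → Fin (T + 1))) : MeasurableSet s :=
  (Set.to_countable s).measurableSet

/-- Any function into `Fin (T+1)` whose level sets `{σ ≤ t}` are measurable is measurable. -/
lemma meas_of_levels {X : Type*} [MeasurableSpace X] {T : ℕ} {σ : X → Fin (T + 1)}
    (h : ∀ t : ℕ, MeasurableSet {x | (σ x : ℕ) ≤ t}) : Measurable σ := by
  apply measurable_to_countable'
  intro j
  have hset : σ ⁻¹' {j} =
      {x | (σ x : ℕ) ≤ (j : ℕ)} \ ⋃ s ∈ Finset.range (j : ℕ), {x | (σ x : ℕ) ≤ s} := by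
    ext x
    simp only [Set.mem_preimage, Set.mem_singleton_iff, Set.mem_diff, Set.mem_iUnion,
      Finset.mem_range, Set.mem_setOf_eq, not_exists]
    constructor
    · rintro rfl
      exact ⟨le_rfl, fun s hs => by omega⟩
    · rintro ⟨h1, h2⟩
      have h3 : ¬ (σ x : ℕ) < (j : ℕ) := fun hlt => h2 _ hlt le_rfl
      exact Fin.ext (by omega)
  rw [hset]
  exact (h _).diff (MeasurableSet.biUnion (Finset.range (j : ℕ)).countable_toSet
    fun s _ => h s)

/-- Composing a time-indexed measurable family with a measurable random time is measurable. -/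
lemma meas_comp_time {X : Type*} [MeasurableSpace X] {T : ℕ} (φ : ℕ → X → ℝ)
    (hφ : ∀ t, Measurable (φ t)) (σ : X → Fin (T + 1)) (hσ : Measurable σ) :
    Measurable fun x => φ ((σ x : ℕ)) x := by
  have hrw : (fun x => φ ((σ x : ℕ)) x) =
      fun x => ∑ j : Fin (T + 1), if σ x = j then φ ((j : ℕ)) x else 0 := by
    ext x
    rw [Finset.sum_eq_single (σ x)]
    · simp
    · intro b _ hb
      rw [if_neg (fun hc => hb hc.symm)]
    · simp
  rw [hrw]
  exact Finset.measurable_sum _ fun j _ =>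
    Measurable.ite (hσ (measurableSet_singleton j)) (hφ _) measurable_const

variable {T N : ℕ}

/-- Decomposition of a product with a measure on the finite space `𝕋^N`. -/
lemma prod_eq_sum (μ : Measure Ω) [IsFiniteMeasure μ]
    (PN : Measure (Fin N → Fin (T + 1))) [IsFiniteMeasure PN] :
    μ.prod PN = ∑ v : Fin N → Fin (T + 1), PN {v} • μ.map (fun ω => (ω, v)) := by
  classical
  refine Measure.prod_eq fun s t hs ht => ?_
  rw [Measure.finset_sum_apply]
  have hterm : ∀ v : Fin N → Fin (T + 1),
      (PN {v} • μ.map (fun ω => (ω, v))) (s ×ˢ t) = if v ∈ t then PN {v} * μ s else 0 := by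
    intro v
    rw [Measure.smul_apply, smul_eq_mul,
      Measure.map_apply measurable_prodMk_right (hs.prod (measurableSet_V t))]
    have : (fun ω => (ω, v)) ⁻¹' (s ×ˢ t) = if v ∈ t then s else ∅ := by
      by_cases hv : v ∈ t <;> ext ω <;> simp [hv]
    rw [this]
    by_cases hv : v ∈ t
    · simp only [if_pos hv]
    · simp only [if_neg hv, measure_empty, mul_zero]
  simp only [hterm]
  have h1 : (∑ x : Fin N → Fin (T + 1), if x ∈ t then PN {x} * μ s else 0) =
      (∑ x ∈ Finset.univ.filter (· ∈ t), PN {x}) * μ s := by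
    rw [Finset.sum_filter, Finset.sum_mul]
    congr 1
    ext x
    by_cases hx : x ∈ t
    · rw [if_pos hx, if_pos hx]
    · rw [if_neg hx, if_neg hx, zero_mul]
  have h2 : (∑ x ∈ Finset.univ.filter (· ∈ t), PN {x}) = PN t := by
    have h3 := sum_measure_preimage_singleton (μ := PN)
      (Finset.univ.filter (· ∈ t)) (f := id) (fun y _ => measurableSet_V _)
    simp only [Set.preimage_id, Finset.coe_filter_univ] at h3
    rw [h3]
    rfl
  rw [h1, h2, mul_comm]

variable {E : Type*} [NormedAddCommGroup E] [NormedSpace ℝ E]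

omit [MeasurableSpace Ω] in
lemma integrable_convComb {X : Type*} [MeasurableSpace X] {lam : ℝ} {μ ν : Measure X}
    {F : X → E} (hμ : Integrable F μ) (hν : Integrable F ν) :
    Integrable F (convComb lam μ ν) :=
  (hμ.smul_measure ENNReal.ofReal_ne_top).add_measure (hν.smul_measure ENNReal.ofReal_ne_top)

omit [MeasurableSpace Ω] in
lemma setIntegral_convComb {X : Type*} [MeasurableSpace X] {lam : ℝ} (h0 : 0 ≤ lam)
    (h1 : lam ≤ 1) {μ ν : Measure X} {F : X → E} (hμ : Integrable F μ) (hν : Integrable F ν)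
    (A : Set X) :
    ∫ x in A, F x ∂(convComb lam μ ν) = (1 - lam) • ∫ x in A, F x ∂μ + lam • ∫ x in A, F x ∂ν := by
  simp only [convComb, Measure.restrict_add, Measure.restrict_smul]
  rw [integral_add_measure ((hμ.restrict).smul_measure ENNReal.ofReal_ne_top)
    ((hν.restrict).smul_measure ENNReal.ofReal_ne_top),
    integral_smul_measure, integral_smul_measure, ENNReal.toReal_ofReal (by linarith),
    ENNReal.toReal_ofReal h0]

lemma setIntegral_prodPN (Q : Measure Ω) [IsFiniteMeasure Q]
    (PN : Measure (Fin N → Fin (T + 1))) [IsFiniteMeasure PN]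
    {F : EnlOmega Ω T N → E} (hF : StronglyMeasurable F)
    (hFv : ∀ v, Integrable (fun ω => F (ω, v)) Q)
    {A : Set (EnlOmega Ω T N)} (hA : MeasurableSet A) :
    ∫ x in A, F x ∂(Q.prod PN) =
      ∑ v : Fin N → Fin (T + 1), (PN {v}).toReal • ∫ ω in (fun ω => (ω, v)) ⁻¹' A, F (ω, v) ∂Q := by
  rw [prod_eq_sum]
  have hres : ((∑ v : Fin N → Fin (T + 1), PN {v} • Q.map (fun ω => (ω, v))).restrict A)
      = ∑ v : Fin N → Fin (T + 1), ((PN {v} • Q.map (fun ω => (ω, v))).restrict A) := by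
    simp only [← Measure.restrictₗ_apply]
    exact map_sum (Measure.restrictₗ A) _ Finset.univ
  have hint : ∀ v : Fin N → Fin (T + 1),
      Integrable F ((PN {v} • Q.map (fun ω => (ω, v))).restrict A) := by
    intro v
    rw [Measure.restrict_smul]
    exact (((integrable_map_measure hF.aestronglyMeasurable
      measurable_prodMk_right.aemeasurable).2 (hFv v)).restrict).smul_measure
      (measure_ne_top PN _)
  rw [show (∫ x in A, F x ∂(∑ v : Fin N → Fin (T + 1), PN {v} • Q.map (fun ω => (ω, v))))
      = ∫ x, F x ∂((∑ v : Fin N → Fin (T + 1), PN {v} • Q.map (fun ω => (ω, v))).restrict A)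
      from rfl, hres, integral_finset_sum_measure (fun v _ => hint v)]
  refine Finset.sum_congr rfl fun v _ => ?_
  rw [Measure.restrict_smul, integral_smul_measure]
  congr 1
  exact setIntegral_map hA hF.aestronglyMeasurable measurable_prodMk_right.aemeasurable

lemma integrable_prodPN (Q : Measure Ω) [IsFiniteMeasure Q]
    (PN : Measure (Fin N → Fin (T + 1))) [IsFiniteMeasure PN]
    {F : EnlOmega Ω T N → E} (hF : StronglyMeasurable F)
    (hFv : ∀ v, Integrable (fun ω => F (ω, v)) Q) :
    Integrable F (Q.prod PN) := by
  rw [prod_eq_sum]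
  exact integrable_finset_sum_measure.2 fun v _ =>
    ((integrable_map_measure hF.aestronglyMeasurable
      measurable_prodMk_right.aemeasurable).2 (hFv v)).smul_measure (measure_ne_top PN _)

/-- The master set-integral decomposition for `Q_λ = (1-λ)·(Q∘e⁻¹) + λ·(Q⊗PN)`. -/
lemma setIntegral_combo (Q : Measure Ω) [IsFiniteMeasure Q]
    (PN : Measure (Fin N → Fin (T + 1))) [IsFiniteMeasure PN]
    {e : Ω → EnlOmega Ω T N} (he : Measurable e) {lam : ℝ} (h0 : 0 ≤ lam) (h1 : lam ≤ 1)
    {F : EnlOmega Ω T N → E} (hF : StronglyMeasurable F)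
    (hFe : Integrable (fun ω => F (e ω)) Q) (hFv : ∀ v, Integrable (fun ω => F (ω, v)) Q)
    {A : Set (EnlOmega Ω T N)} (hA : MeasurableSet A) :
    ∫ x in A, F x ∂(convComb lam (Q.map e) (Q.prod PN)) =
      (1 - lam) • ∫ ω in e ⁻¹' A, F (e ω) ∂Q +
      lam • ∑ v : Fin N → Fin (T + 1),
        (PN {v}).toReal • ∫ ω in (fun ω => (ω, v)) ⁻¹' A, F (ω, v) ∂Q := by
  have hμ : Integrable F (Q.map e) :=
    (integrable_map_measure hF.aestronglyMeasurable he.aemeasurable).2 hFe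
  have hν : Integrable F (Q.prod PN) := integrable_prodPN Q PN hF hFv
  rw [setIntegral_convComb h0 h1 hμ hν A, setIntegral_prodPN Q PN hF hFv hA,
    setIntegral_map hA hF.aestronglyMeasurable he.aemeasurable]

/-- Plain-integral version of `setIntegral_combo`. -/
lemma integral_combo (Q : Measure Ω) [IsFiniteMeasure Q]
    (PN : Measure (Fin N → Fin (T + 1))) [IsFiniteMeasure PN]
    {e : Ω → EnlOmega Ω T N} (he : Measurable e) {lam : ℝ} (h0 : 0 ≤ lam) (h1 : lam ≤ 1)
    {F : EnlOmega Ω T N → E} (hF : StronglyMeasurable F)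
    (hFe : Integrable (fun ω => F (e ω)) Q) (hFv : ∀ v, Integrable (fun ω => F (ω, v)) Q) :
    ∫ x, F x ∂(convComb lam (Q.map e) (Q.prod PN)) =
      (1 - lam) • ∫ ω, F (e ω) ∂Q +
      lam • ∑ v : Fin N → Fin (T + 1), (PN {v}).toReal • ∫ ω, F (ω, v) ∂Q := by
  have := setIntegral_combo Q PN he h0 h1 hF hFe hFv (A := Set.univ) MeasurableSet.univ
  simpa only [Measure.restrict_univ, Set.preimage_univ] using this

variable {ℱ : ℕ → MeasurableSpace Ω}

lemma enlF_le_ambient (hle : ∀ t, ℱ t ≤ (inferInstance : MeasurableSpace Ω)) (t : ℕ) {n : ℕ} :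
    enlF T n ℱ t ≤ (inferInstance : MeasurableSpace (EnlOmega Ω T n)) := by
  rw [enlF]
  apply MeasurableSpace.generateFrom_le
  rintro A (⟨B, hB, rfl⟩ | ⟨k, s, hs, rfl⟩)
  · exact measurable_fst (hle t _ hB)
  · exact measurable_snd (measurableSet_V {v | ((v k : ℕ)) ≤ s})

lemma measurable_e_enlF (hmono : Monotone ℱ) {τ : Fin N → Ω → Fin (T + 1)}
    (hτ : ∀ k, IsOrigStoppingTime T ℱ (τ k)) (t : ℕ) :
    @Measurable Ω (EnlOmega Ω T N) (ℱ t) (enlF T N ℱ t)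
      (fun ω => (ω, fun k => τ k ω)) := by
  rw [enlF]
  refine @measurable_generateFrom _ _ (ℱ t) _ _ ?_
  rintro A (⟨B, hB, rfl⟩ | ⟨k, s, hs, rfl⟩)
  · exact hB
  · exact (hmono hs) _ (hτ k s)

lemma measurable_iota_enlF (t : ℕ) {n : ℕ}
    (v' : Fin n → Fin (T + 1)) :
    @Measurable Ω (EnlOmega Ω T n) (ℱ t) (enlF T n ℱ t) (fun ω => (ω, v')) := by
  rw [enlF]
  refine @measurable_generateFrom _ _ (ℱ t) _ _ ?_
  rintro A (⟨B, hB, rfl⟩ | ⟨k, s, hs, rfl⟩)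
  · exact hB
  · by_cases hv : ((v' k : ℕ)) ≤ s
    · have hset : (fun ω : Ω => (ω, v')) ⁻¹' {x : EnlOmega Ω T n | ((x.2 k : ℕ)) ≤ s}
          = Set.univ := by
        ext ω; simp [hv]
      rw [hset]; exact @MeasurableSet.univ _ (ℱ t)
    · have hset : (fun ω : Ω => (ω, v')) ⁻¹' {x : EnlOmega Ω T n | ((x.2 k : ℕ)) ≤ s}
          = ∅ := by
        ext ω; simp [hv]
      rw [hset]; exact @MeasurableSet.empty _ (ℱ t)

end Aux

/-- Remark 3.4 of the paper. If on the original space there is a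
martingale measure `Q ∼ ℙ` with `E_Q[f] < α`, `sup_τ E_Q[g_τ] < β` and stopping times
`τ¹,…,τ^N` with `E_Q[hᵏ_{τᵏ}] > γᵏ`, then for `Q' = Q ∘ (ω ↦ (ω,τ(ω)))⁻¹` and
`Q'' = Q ⊗ P`, the combination `Q_λ = (1-λ)Q' + λQ''` lies in `𝒬̄^N` for all `λ ∈ (0,1)`
close enough to `0`; in particular `𝒬̄^N ≠ ∅`. -/
theorem original_equivalent_martingale_measure_implies_Qbar_nonempty
    [MeasurableSpace.CountablyGenerated Ω]
    (T d L M N : ℕ)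
    (ℱ : ℕ → MeasurableSpace Ω) (hmono : Monotone ℱ)
    (hle : ∀ t, ℱ t ≤ (inferInstance : MeasurableSpace Ω))
    (ℙ : Measure Ω) [IsProbabilityMeasure ℙ]
    (S : ℕ → Ω → Fin d → ℝ) (hS : ∀ t, Measurable[ℱ t] (S t))
    (f : Fin L → Ω → ℝ) (hf : ∀ i, Measurable[ℱ T] (f i))
    (hfb : ∃ C, ∀ i ω, |f i ω| ≤ C)
    (g : Fin M → ℕ → Ω → ℝ) (hg : ∀ j t, Measurable[ℱ t] (g j t))
    (hgb : ∃ C, ∀ j t ω, |g j t ω| ≤ C)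
    (h : Fin N → ℕ → Ω → ℝ) (hh : ∀ k t, Measurable[ℱ t] (h k t))
    (hhb : ∃ C, ∀ k t ω, |h k t ω| ≤ C)
    (α : Fin L → ℝ) (β : Fin M → ℝ) (γ : Fin N → ℝ)
    (PN : Measure (Fin N → Fin (T + 1))) [IsProbabilityMeasure PN]
    (hfullN : ∀ v : Fin N → Fin (T + 1), 0 < PN {v})
    -- the given martingale measure on the original space
    (Q : Measure Ω) [IsProbabilityMeasure Q] (hQP : Q ≪ ℙ) (hPQ : ℙ ≪ Q)
    (hQmart : IsMartingaleMeasure T d ℱ S Q)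
    (hQf : ∀ i, ∫ ω, f i ω ∂Q < α i)
    (hQg : ∀ j, sSup {r : ℝ | ∃ σ : Ω → Fin (T + 1), IsOrigStoppingTime T ℱ σ ∧
        r = ∫ ω, g j ((σ ω) : ℕ) ω ∂Q} < β j)
    -- the stopping times giving E_Q[hᵏ_{τᵏ}] > γᵏ
    (τ : Fin N → Ω → Fin (T + 1)) (hτ : ∀ k, IsOrigStoppingTime T ℱ (τ k))
    (hQh : ∀ k, γ k < ∫ ω, h k ((τ k ω) : ℕ) ω ∂Q) :
    (∃ lam0 > (0 : ℝ), ∀ lam : ℝ, 0 < lam → lam < 1 → lam < lam0 →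
      convComb lam (stopPush T N Q τ) (Q.prod PN) ∈
        QbarSet T d L M N N le_rfl ℱ S f g h (ℙ.prod PN) α β γ) ∧
    (QbarSet T d L M N N le_rfl ℱ S f g h (ℙ.prod PN) α β γ).Nonempty := by
  classical
  obtain ⟨Cf, hCf⟩ := hfb
  obtain ⟨Cg, hCg⟩ := hgb
  obtain ⟨Ch, hCh⟩ := hhb
  set e : Ω → EnlOmega Ω T N := fun ω => (ω, fun k => τ k ω) with he_def
  have hmeasτ : ∀ k, Measurable (τ k) := fun k =>
    meas_of_levels (fun t => hle t _ (hτ k t))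
  have he : Measurable e := measurable_id.prodMk (measurable_pi_lambda _ fun k => hmeasτ k)
  have hQPmap : stopPush T N Q τ = Q.map e := rfl
  have hSamb : ∀ t, Measurable (S t) := fun t => (hS t).mono (hle t) le_rfl
  have hsum1 : ∑ v : Fin N → Fin (T + 1), (PN {v}).toReal = 1 := by
    have h3 := sum_measure_preimage_singleton (μ := PN) Finset.univ (f := id)
      (fun y _ => measurableSet_V _)
    simp only [Set.preimage_id, Finset.coe_univ] at h3
    rw [← ENNReal.toReal_sum (fun a _ => measure_ne_top _ _), h3, measure_univ,
      ENNReal.toReal_one]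
  have hIntB : ∀ (G : EnlOmega Ω T N → ℝ) (C : ℝ), Measurable G → (∀ x, |G x| ≤ C) →
      (Integrable (fun ω => G (e ω)) Q ∧ ∀ v, Integrable (fun ω => G (ω, v)) Q) := by
    intro G C hG hC
    constructor
    · exact ⟨(hG.comp he).aestronglyMeasurable,
        HasFiniteIntegral.of_bounded (C := C) (ae_of_all _ fun ω => by
          rw [Real.norm_eq_abs]; exact hC _)⟩
    · intro v
      exact ⟨(hG.comp measurable_prodMk_right).aestronglyMeasurable,
        HasFiniteIntegral.of_bounded (C := C) (ae_of_all _ fun ω => by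
          rw [Real.norm_eq_abs]; exact hC _)⟩
  have hfstm : Measurable (Prod.fst : EnlOmega Ω T N → Ω) := measurable_fst
  have hcompfst : ∀ φ : Ω → ℝ, Measurable φ →
      Measurable (fun x : EnlOmega Ω T N => φ x.1) := fun φ hφ => hφ.comp hfstm
  have hextShort_meas : ∀ k, Measurable (extShort T N N le_rfl h k) := by
    intro k
    exact meas_comp_time (T := T) (fun t x => h k t x.1)
      (fun t => hcompfst _ ((hh k t).mono (hle t) le_rfl))
      (fun x : EnlOmega Ω T N => x.2 (Fin.castLE le_rfl k))
      ((measurable_pi_apply _).comp measurable_snd)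
  set Ak : Fin N → ℝ := fun k => ∫ ω, extShort T N N le_rfl h k (e ω) ∂Q with hAk_def
  set Bk : Fin N → ℝ := fun k => ∑ v : Fin N → Fin (T + 1),
      (PN {v}).toReal • ∫ ω, extShort T N N le_rfl h k (ω, v) ∂Q with hBk_def
  have hAk_gt : ∀ k, γ k < Ak k := fun k => hQh k
  set lam0 : ℝ := (insert (1 : ℝ) (Finset.univ.image fun k : Fin N =>
      (Ak k - γ k) / (|Ak k - Bk k| + 1))).min' (Finset.insert_nonempty _ _) with hlam0_def
  have hlam0_pos : 0 < lam0 := by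
    rw [hlam0_def]
    apply (Finset.lt_min'_iff _ _).2
    intro b hb
    rcases Finset.mem_insert.1 hb with rfl | hb
    · exact one_pos
    · obtain ⟨k, -, rfl⟩ := Finset.mem_image.1 hb
      exact div_pos (by linarith [hAk_gt k]) (by positivity)
  have hprodnull : ∀ (μ : Measure Ω), IsFiniteMeasure μ →
      ∀ (A : Set (EnlOmega Ω T N)), MeasurableSet A →
      ((μ.prod PN) A = 0 ↔ ∀ v, μ ((fun ω => (ω, v)) ⁻¹' A) = 0) := by
    intro μ hfin A hA
    haveI := hfin
    rw [prod_eq_sum μ PN, Measure.finset_sum_apply, Finset.sum_eq_zero_iff]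
    constructor
    · intro hz v
      have h' := hz v (Finset.mem_univ v)
      rw [Measure.smul_apply, smul_eq_mul,
        Measure.map_apply measurable_prodMk_right hA] at h'
      rcases mul_eq_zero.1 h' with h'' | h''
      · exact absurd h'' (hfullN v).ne'
      · exact h''
    · intro hz v _
      rw [Measure.smul_apply, smul_eq_mul,
        Measure.map_apply measurable_prodMk_right hA, hz v, mul_zero]
  have main : ∀ lam : ℝ, 0 < lam → lam < 1 → lam < lam0 →
      convComb lam (stopPush T N Q τ) (Q.prod PN) ∈
        QbarSet T d L M N N le_rfl ℱ S f g h (ℙ.prod PN) α β γ := by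
    intro lam hl0 hl1 hll
    have hl0' : (0 : ℝ) ≤ lam := le_of_lt hl0
    have hl1' : lam ≤ 1 := le_of_lt hl1
    rw [hQPmap]
    have hQlam_apply : ∀ A : Set (EnlOmega Ω T N),
        (convComb lam (Q.map e) (Q.prod PN)) A =
          ENNReal.ofReal (1 - lam) * (Q.map e) A + ENNReal.ofReal lam * (Q.prod PN) A := by
      intro A
      simp only [convComb, Measure.add_apply, Measure.smul_apply, smul_eq_mul]
    haveI : IsProbabilityMeasure (Q.map e) := Measure.isProbabilityMeasure_map he.aemeasurable
    refine ⟨?_, ?_, ?_, ⟨?_, ?_⟩, ?_, ?_, ?_⟩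
    -- probability measure
    · refine ⟨?_⟩
      rw [hQlam_apply Set.univ, measure_univ, measure_univ, mul_one, mul_one,
        ← ENNReal.ofReal_add (by linarith) hl0', show 1 - lam + lam = 1 by ring,
        ENNReal.ofReal_one]
    -- Qlam ≪ ℙ ⊗ PN
    · refine Measure.AbsolutelyContinuous.mk fun A hA h0 => ?_
      have hv : ∀ v, ℙ ((fun ω => (ω, v)) ⁻¹' A) = 0 :=
        (hprodnull ℙ inferInstance A hA).1 h0
      have hQv : ∀ v, Q ((fun ω => (ω, v)) ⁻¹' A) = 0 := fun v => hQP (hv v)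
      have hQe : Q (e ⁻¹' A) = 0 := by
        refine measure_mono_null (t := ⋃ v : Fin N → Fin (T + 1), (fun ω => (ω, v)) ⁻¹' A)
          ?_ (measure_iUnion_null fun v => hQv v)
        intro ω hω
        exact Set.mem_iUnion.2 ⟨fun k => τ k ω, hω⟩
      rw [hQlam_apply A, Measure.map_apply he hA, hQe,
        (hprodnull Q inferInstance A hA).2 hQv, mul_zero, mul_zero, add_zero]
    -- ℙ ⊗ PN ≪ Qlam
    · refine Measure.AbsolutelyContinuous.mk fun A hA h0 => ?_
      rw [hQlam_apply A] at h0
      have h2 : ENNReal.ofReal lam * (Q.prod PN) A = 0 := (add_eq_zero.1 h0).2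
      have h3 : (Q.prod PN) A = 0 := by
        rcases mul_eq_zero.1 h2 with h' | h'
        · rw [ENNReal.ofReal_eq_zero] at h'
          linarith
        · exact h'
      have hQv := (hprodnull Q inferInstance A hA).1 h3
      exact (hprodnull ℙ inferInstance A hA).2 fun v => hPQ (hQv v)
    -- martingale : integrability
    · intro u hu
      refine integrable_convComb ?_ ?_
      · exact (integrable_map_measure
          ((hSamb u).comp hfstm).stronglyMeasurable.aestronglyMeasurable
          he.aemeasurable).2 (hQmart.1 u hu)
      · exact integrable_prodPN Q PN ((hSamb u).comp hfstm).stronglyMeasurable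
          (fun v => hQmart.1 u hu)
    -- martingale : conditional expectation
    · intro t ht A hA
      have hAamb : MeasurableSet A := enlF_le_ambient hle t _ hA
      rw [setIntegral_combo Q PN he hl0' hl1' (F := extProc T N S (t + 1))
          ((hSamb (t + 1)).comp hfstm).stronglyMeasurable
          (hQmart.1 (t + 1) ht) (fun v => hQmart.1 (t + 1) ht) hAamb,
        setIntegral_combo Q PN he hl0' hl1' (F := extProc T N S t)
          ((hSamb t).comp hfstm).stronglyMeasurable
          (hQmart.1 t (le_of_lt ht)) (fun v => hQmart.1 t (le_of_lt ht)) hAamb]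
      congr 1
      · congr 1
        exact hQmart.2 t ht _ ((measurable_e_enlF hmono hτ t) hA)
      · congr 1
        refine Finset.sum_congr rfl fun v _ => ?_
        congr 1
        exact hQmart.2 t ht _ ((measurable_iota_enlF t v) hA)
    -- European options
    · intro i
      have hFm : Measurable (extFun T N (f i)) :=
        ((hf i).mono (hle T) le_rfl).comp hfstm
      obtain ⟨hIe, hIv⟩ := hIntB (extFun T N (f i)) Cf hFm (fun x => hCf i x.1)
      rw [integral_combo Q PN he hl0' hl1' hFm.stronglyMeasurable hIe hIv]
      have h1 : ∫ ω, extFun T N (f i) (e ω) ∂Q = ∫ ω, f i ω ∂Q := rfl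
      have h2 : ∀ v, ∫ ω, extFun T N (f i) (ω, v) ∂Q = ∫ ω, f i ω ∂Q := fun v => rfl
      simp only [h1, h2, smul_eq_mul]
      rw [← Finset.sum_mul, hsum1, one_mul,
        show (1 - lam) * (∫ ω, f i ω ∂Q) + lam * (∫ ω, f i ω ∂Q) = ∫ ω, f i ω ∂Q by ring]
      exact hQf i
    -- shorted American options
    · intro k
      have hFm := hextShort_meas k
      obtain ⟨hIe, hIv⟩ := hIntB _ Ch hFm (fun x => hCh k _ x.1)
      rw [integral_combo Q PN he hl0' hl1' hFm.stronglyMeasurable hIe hIv]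
      show γ k < (1 - lam) * Ak k + lam * Bk k
      have hmin : lam0 ≤ (Ak k - γ k) / (|Ak k - Bk k| + 1) :=
        Finset.min'_le _ _ (Finset.mem_insert_of_mem
          (Finset.mem_image_of_mem _ (Finset.mem_univ k)))
      have hlt : lam < (Ak k - γ k) / (|Ak k - Bk k| + 1) := lt_of_lt_of_le hll hmin
      have hpos : (0 : ℝ) < |Ak k - Bk k| + 1 := by positivity
      have hd : lam * (|Ak k - Bk k| + 1) < Ak k - γ k := (lt_div_iff₀ hpos).1 hlt
      nlinarith [mul_le_mul_of_nonneg_left (le_abs_self (Ak k - Bk k)) hl0']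
    -- long American options
    · intro j
      have hOrigBdd : BddAbove {r : ℝ | ∃ σ : Ω → Fin (T + 1), IsOrigStoppingTime T ℱ σ ∧
          r = ∫ ω, g j ((σ ω) : ℕ) ω ∂Q} := by
        refine ⟨Cg, ?_⟩
        rintro r ⟨σ, hσ, rfl⟩
        calc ∫ ω, g j ((σ ω) : ℕ) ω ∂Q ≤ ‖∫ ω, g j ((σ ω) : ℕ) ω ∂Q‖ := le_abs_self _
          _ ≤ Cg * (Q Set.univ).toReal := norm_integral_le_of_norm_le_const
                (ae_of_all _ fun ω => by rw [Real.norm_eq_abs]; exact hCg j _ ω)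
          _ = Cg := by rw [measure_univ, ENNReal.toReal_one, mul_one]
      refine lt_of_le_of_lt (csSup_le ?_ ?_) (hQg j)
      · refine ⟨_, ⟨fun _ => (0 : Fin (T + 1)), fun t => ?_, rfl⟩⟩
        have hset : {x : EnlOmega Ω T N | (((0 : Fin (T + 1)) : ℕ)) ≤ t} = Set.univ := by
          ext x; simp
        rw [hset]
        exact @MeasurableSet.univ _ (enlF T N ℱ t)
      · rintro r ⟨τb, hτb, rfl⟩
        have hτbm : Measurable τb := meas_of_levels fun t => enlF_le_ambient hle t _ (hτb t)
        have hGm : Measurable (fun x : EnlOmega Ω T N => g j ((τb x : ℕ)) x.1) :=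
          meas_comp_time (fun t x => g j t x.1)
            (fun t => hcompfst _ ((hg j t).mono (hle t) le_rfl)) τb hτbm
        obtain ⟨hIe, hIv⟩ := hIntB _ Cg hGm (fun x => hCg j _ x.1)
        rw [integral_combo Q PN he hl0' hl1' hGm.stronglyMeasurable hIe hIv]
        have he_le : ∫ ω, g j ((τb (e ω) : ℕ)) ω ∂Q ≤
            sSup {r : ℝ | ∃ σ : Ω → Fin (T + 1), IsOrigStoppingTime T ℱ σ ∧
              r = ∫ ω, g j ((σ ω) : ℕ) ω ∂Q} :=
          le_csSup hOrigBdd ⟨fun ω => τb (e ω),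
            fun t => (measurable_e_enlF hmono hτ t) (hτb t), rfl⟩
        have hv_le : ∀ v : Fin N → Fin (T + 1), ∫ ω, g j ((τb (ω, v) : ℕ)) ω ∂Q ≤
            sSup {r : ℝ | ∃ σ : Ω → Fin (T + 1), IsOrigStoppingTime T ℱ σ ∧
              r = ∫ ω, g j ((σ ω) : ℕ) ω ∂Q} := fun v =>
          le_csSup hOrigBdd ⟨fun ω => τb (ω, v),
            fun t => (measurable_iota_enlF t v) (hτb t), rfl⟩
        set sj := sSup {r : ℝ | ∃ σ : Ω → Fin (T + 1), IsOrigStoppingTime T ℱ σ ∧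
          r = ∫ ω, g j ((σ ω) : ℕ) ω ∂Q} with hsj_def
        simp only [smul_eq_mul]
        have hsum_le : ∑ v : Fin N → Fin (T + 1),
            (PN {v}).toReal * ∫ ω, g j ((τb (ω, v) : ℕ)) ω ∂Q ≤ sj := by
          calc ∑ v : Fin N → Fin (T + 1),
              (PN {v}).toReal * ∫ ω, g j ((τb (ω, v) : ℕ)) ω ∂Q
              ≤ ∑ v : Fin N → Fin (T + 1), (PN {v}).toReal * sj :=
                Finset.sum_le_sum fun v _ =>
                  mul_le_mul_of_nonneg_left (hv_le v) ENNReal.toReal_nonneg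
            _ = sj := by rw [← Finset.sum_mul, hsum1, one_mul]
        nlinarith [mul_le_mul_of_nonneg_left he_le (by linarith : (0:ℝ) ≤ 1 - lam),
          mul_le_mul_of_nonneg_left hsum_le hl0']
  refine ⟨⟨lam0, hlam0_pos, main⟩, ?_⟩
  exact ⟨convComb (min (lam0 / 2) 2⁻¹) (stopPush T N Q τ) (Q.prod PN),
    main _ (lt_min (by linarith) (by norm_num))
      (lt_of_le_of_lt (min_le_right _ _) (by norm_num))
      (lt_of_le_of_lt (min_le_left _ _) (by linarith))⟩


end Stmt6
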